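/- arXiv:1104.5035 — 2 statements merged into one kernel-verified Lean document; each statement's English description precedes it below -/
import Mathlib

section
/- Let Y = Spec A be a reduced Noetherian affine scheme and M a finitely generated A-module. If the function y ↦ dim_{k(y)}(M ⊗_A k(y)) on prime ideals y of A is constant, then M is a flat (equivalently, projective) A-module. -/
/-!
Freeness is local, so it suffices to show that each stalk `N = A_p ⊗ M` is free over the reduced
local ring `A_p`. By Nakayama, a basis of the closed fibre lifts to a surjection `A_pⁿ → N`.
Over every residue field this surjection becomes a surjection between `n`-dimensional spaces,
hence an isomorphism; so the coordinates of a kernel element vanish in every residue field,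
i.e. lie in every prime, and are therefore nilpotent, hence zero.
-/

open scoped TensorProduct

universe u

/-- The dimension of the fibre `M ⊗_A k(p)` of a module `M` at a prime `p`, where
`k(p) = Frac(A/p)` is the residue field at `p`; the base change to `k(p)` is performed
in two steps, first to `A/p` and then to its fraction field. -/
noncomputable def fibreDimension (A : Type u) [CommRing A]
    (M : Type u) [AddCommGroup M] [Module A M] (p : PrimeSpectrum A) : ℕ :=
  Module.finrank (FractionRing (A ⧸ p.asIdeal))
    (FractionRing (A ⧸ p.asIdeal) ⊗[A ⧸ p.asIdeal] ((A ⧸ p.asIdeal) ⊗[A] M))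

open TensorProduct Module

lemma finrank_tensorProduct_eq_of_isScalarTower (A : Type*) [CommRing A] (M : Type*)
    [AddCommGroup M] [Module A M] (K L : Type*) [Field K] [Field L] [Algebra A K] [Algebra A L]
    [Algebra K L] [IsScalarTower A K L] :
    finrank L (L ⊗[A] M) = finrank K (K ⊗[A] M) := by
  rw [← (AlgebraTensorModule.cancelBaseChange A K L L M).finrank_eq, finrank_baseChange]

lemma finrank_tensorProduct_eq_fibreDimension (A : Type u) [CommRing A] (M : Type u)
    [AddCommGroup M] [Module A M] (L : Type u) [Field L] [Algebra A L] :
    finrank L (L ⊗[A] M) =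
      fibreDimension A M ⟨RingHom.ker (algebraMap A L), RingHom.ker_isPrime _⟩ := by
  have : (RingHom.ker (algebraMap A L)).IsPrime := RingHom.ker_isPrime _
  let B := A ⧸ RingHom.ker (algebraMap A L)
  let F := FractionRing B
  let _ : Algebra F L :=
    (IsFractionRing.lift (K := F) (RingHom.kerLift_injective (algebraMap A L))).toAlgebra
  have : IsScalarTower A F L := IsScalarTower.of_algebraMap_eq fun x => by
    change _ = IsFractionRing.lift _ (algebraMap A F x)
    rw [IsScalarTower.algebraMap_apply A B F, IsFractionRing.lift_algebraMap]
    rfl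
  rw [fibreDimension, (AlgebraTensorModule.cancelBaseChange A B F F M).finrank_eq]
  exact finrank_tensorProduct_eq_of_isScalarTower A M F L

lemma IsReduced.eq_zero_of_forall_algebraMap_eq_zero {R : Type u} [CommRing R] [IsReduced R]
    {r : R} (h : ∀ (L : Type u) [Field L] [Algebra R L], algebraMap R L r = 0) : r = 0 := by
  refine IsReduced.eq_zero _ (nilpotent_iff_mem_prime.mpr fun J hJ => ?_)
  rw [← Ideal.Quotient.eq_zero_iff_mem, ← Ideal.Quotient.algebraMap_eq,
    ← (IsFractionRing.injective (R ⧸ J) (FractionRing (R ⧸ J))).eq_iff, map_zero,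
    ← IsScalarTower.algebraMap_apply]
  exact h _

lemma LinearMap.injective_of_forall_baseChange_injective {R : Type u} [CommRing R] [IsReduced R]
    {N : Type*} [AddCommGroup N] [Module R N] {ι : Type*} [Fintype ι]
    (φ : (ι → R) →ₗ[R] N)
    (h : ∀ (L : Type u) [Field L] [Algebra R L], Function.Injective (φ.baseChange L)) :
    Function.Injective φ := by
  classical
  refine (injective_iff_map_eq_zero φ).mpr fun x hx => funext fun i => ?_
  refine IsReduced.eq_zero_of_forall_algebraMap_eq_zero fun L _ _ => ?_
  have hx' : (1 : L) ⊗ₜ[R] x = 0 := h L (by rw [baseChange_tmul, hx, tmul_zero, map_zero])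
  simpa [Algebra.algebraMap_eq_smul_one] using
    congrFun (congrArg (piScalarRight R L L ι) hx') i

lemma LinearMap.baseChange_injective_of_surjective_of_finrank_eq {R : Type u} [CommRing R]
    {N : Type*} [AddCommGroup N] [Module R N] [Module.Finite R N] {n : ℕ}
    (φ : (Fin n → R) →ₗ[R] N) (hφ : Function.Surjective φ)
    (L : Type u) [Field L] [Algebra R L] (hN : finrank L (L ⊗[R] N) = n) :
    Function.Injective (φ.baseChange L) := by
  have hdim : finrank L (L ⊗[R] (Fin n → R)) = finrank L (L ⊗[R] N) := by
    rw [(piScalarRight R L L (Fin n)).finrank_eq, finrank_fin_fun, hN]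
  refine (LinearMap.injective_iff_surjective_of_finrank_eq_finrank hdim).mpr ?_
  rw [baseChange_eq_ltensor]
  exact lTensor_surjective L hφ

theorem Module.free_of_isReduced_of_finrank_tensorProduct_eq {R : Type u} [CommRing R]
    [IsLocalRing R] [IsReduced R] (N : Type*) [AddCommGroup N] [Module R N] [Module.Finite R N]
    (n : ℕ) (hN : ∀ (L : Type u) [Field L] [Algebra R L], finrank L (L ⊗[R] N) = n) :
    Module.Free R N := by
  let k := IsLocalRing.ResidueField R
  let b := finBasisOfFinrankEq k (k ⊗[R] N) (hN k)
  choose f hf using fun i => mk_surjective R N k IsLocalRing.residue_surjective (b i)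
  let φ := Fintype.linearCombination R f
  have hφsurj : Function.Surjective φ := by
    rw [← LinearMap.range_eq_top, Fintype.range_linearCombination]
    exact IsLocalRing.span_eq_top_of_tmul_eq_basis f b hf
  have hφinj : Function.Injective φ := φ.injective_of_forall_baseChange_injective
    fun L _ _ => φ.baseChange_injective_of_surjective_of_finrank_eq hφsurj L (hN L)
  exact Module.Free.of_equiv (LinearEquiv.ofBijective φ ⟨hφinj, hφsurj⟩)

/-- Let `Y = Spec A` be a reduced Noetherian affine scheme and `M` a finitely generated
`A`-module.  If the function `y ↦ dim_{k(y)} (M ⊗_A k(y))` on `Spec A` is constant, then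
`M` is a flat (equivalently, projective) `A`-module. -/
theorem flat_of_constant_fibreDimension (A : Type u) [CommRing A] [IsNoetherianRing A]
    [IsReduced A] (M : Type u) [AddCommGroup M] [Module A M] [Module.Finite A M]
    (h : ∃ n : ℕ, ∀ p : PrimeSpectrum A, fibreDimension A M p = n) :
    Module.Flat A M ∧ Module.Projective A M := by
  obtain ⟨n, h⟩ := h
  have : Module.FinitePresentation A M := finitePresentation_of_finite A M
  have : Module.Projective A M := by
    refine freeLocus_eq_univ_iff.mp (Set.eq_univ_of_forall fun p => ?_)
    let Ap := Localization.AtPrime p.asIdeal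
    rw [mem_freeLocus_iff_tensor p Ap]
    refine free_of_isReduced_of_finrank_tensorProduct_eq _ n fun L _ _ => ?_
    let _ : Algebra A L := ((algebraMap Ap L).comp (algebraMap A Ap)).toAlgebra
    have : IsScalarTower A Ap L := IsScalarTower.of_algebraMap_eq' rfl
    rw [(AlgebraTensorModule.cancelBaseChange A Ap L L M).finrank_eq,
      finrank_tensorProduct_eq_fibreDimension, h]
  exact ⟨Flat.of_projective, this⟩
end

section
/- Let A be a Noetherian ring and M a finitely generated A-module. Then the function y ↦ dim_{k(y)}(M ⊗_A k(y)) on Spec A is upper semi-continuous. -/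
/-!
Choose `x₁, …, x_d ∈ M` whose images form a basis of the fibre at `y`, and let `N` be the
submodule they span. By right exactness of `⊗`, the fibre of `M ⧸ N` at a prime `z` vanishes
exactly when the `xᵢ` span the fibre of `M` at `z`. So the fibre of `M ⧸ N` vanishes at `y`, hence
(Nakayama) `y` lies outside the support of `M ⧸ N`, which is closed since `M ⧸ N` is finite.
On the open complement of this support all fibres of `M ⧸ N` vanish, so the fibres of `M` there
are spanned by `d` vectors.
-/

open scoped TensorProduct

universe u

open TensorProduct Submodule

section

variable {R M : Type*} [CommRing R] [AddCommGroup M] [Module R M]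

lemma Submodule.baseChange_eq_top_iff_subsingleton_tensor_quotient (B : Type*) [Ring B]
    [Algebra R B] (N : Submodule R M) :
    N.baseChange B = ⊤ ↔ Subsingleton (B ⊗[R] (M ⧸ N)) := by
  have hexact := lTensor_exact B (LinearMap.exact_subtype_mkQ N) N.mkQ_surjective
  have hsurj := LinearMap.lTensor_surjective B N.mkQ_surjective
  rw [eq_top_iff', subsingleton_iff_forall_eq 0, hsurj.forall]
  exact forall_congr' fun x => (hexact x).symm

lemma finrank_le_card_of_baseChange_span_eq_top (K : Type*) [Ring K] [StrongRankCondition K]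
    [Algebra R K] {ι : Type*} [Fintype ι] {x : ι → M}
    (hx : (span R (Set.range x)).baseChange K = ⊤) :
    Module.finrank K (K ⊗[R] M) ≤ Fintype.card ι := by
  rw [baseChange_span, ← Set.range_comp] at hx
  rw [← finrank_top, ← hx]
  exact finrank_range_le_card (R := K) _

lemma exists_baseChange_span_eq_top (K : Type*) [DivisionRing K] [Algebra R K]
    [FiniteDimensional K (K ⊗[R] M)] :
    ∃ x : Fin (Module.finrank K (K ⊗[R] M)) → M, (span R (Set.range x)).baseChange K = ⊤ := by
  have hspan : ⊤ ≤ span K (Set.range (TensorProduct.mk R K M 1)) := by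
    rw [← Set.image_univ, ← baseChange_span, span_univ, baseChange_top]
  let b₀ := Module.Basis.ofSpan hspan
  let b := b₀.reindex (Fintype.equivFinOfCardEq (Module.finrank_eq_card_basis b₀).symm)
  have hb : ∀ i, ∃ m, 1 ⊗ₜ[R] m = b i := fun i => by
    rw [Module.Basis.reindex_apply]
    exact Module.Basis.ofSpan_subset hspan (Set.mem_range_self _)
  choose x hx using hb
  refine ⟨x, ?_⟩
  rw [baseChange_span, ← Set.range_comp]
  simp only [Function.comp_def, mk_apply, hx, b.span_eq]

lemma Module.notMem_support_iff_subsingleton_fractionRing_tensor [Module.Finite R M]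
    (p : PrimeSpectrum R) :
    p ∉ Module.support R M ↔ Subsingleton (FractionRing (R ⧸ p.asIdeal) ⊗[R] M) := by
  let e : FractionRing (R ⧸ p.asIdeal) ≃ₐ[R] p.asIdeal.ResidueField :=
    (FractionRing.algEquiv (R ⧸ p.asIdeal) _).restrictScalars R
  rw [mem_support_iff_nontrivial_residueField_tensorProduct, not_nontrivial_iff_subsingleton,
    (TensorProduct.congr e.toLinearEquiv (LinearEquiv.refl R M)).subsingleton_congr]

end

lemma fibreDimension_eq_finrank {A : Type u} [CommRing A] (M : Type u) [AddCommGroup M]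
    [Module A M] (p : PrimeSpectrum A) :
    fibreDimension A M p =
      Module.finrank (FractionRing (A ⧸ p.asIdeal)) (FractionRing (A ⧸ p.asIdeal) ⊗[A] M) :=
  (AlgebraTensorModule.cancelBaseChange A (A ⧸ p.asIdeal) (FractionRing (A ⧸ p.asIdeal)) _
    M).finrank_eq

theorem upperSemicontinuous_fibreDimension_general (A : Type u) [CommRing A]
    (M : Type u) [AddCommGroup M] [Module A M] [Module.Finite A M] :
    UpperSemicontinuous (fun p : PrimeSpectrum A => fibreDimension A M p) := by
  intro y n hn
  obtain ⟨x, hx⟩ :=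
    exists_baseChange_span_eq_top (R := A) (M := M) (FractionRing (A ⧸ y.asIdeal))
  have hy : y ∉ Module.support A (M ⧸ span A (Set.range x)) := by
    rwa [Module.notMem_support_iff_subsingleton_fractionRing_tensor,
      ← baseChange_eq_top_iff_subsingleton_tensor_quotient]
  filter_upwards [Module.isClosed_support.isOpen_compl.mem_nhds hy] with z hz
  rw [Set.mem_compl_iff, Module.notMem_support_iff_subsingleton_fractionRing_tensor,
    ← baseChange_eq_top_iff_subsingleton_tensor_quotient] at hz
  simp only [fibreDimension_eq_finrank] at hn ⊢
  exact (finrank_le_card_of_baseChange_span_eq_top _ hz).trans_lt (by rwa [Fintype.card_fin])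

/-- Let `A` be a Noetherian ring and `M` a finitely generated `A`-module.  Then the
function `y ↦ dim_{k(y)} (M ⊗_A k(y))` is upper semi-continuous on `Spec A`. -/
theorem upperSemicontinuous_fibreDimension (A : Type u) [CommRing A] [IsNoetherianRing A]
    (M : Type u) [AddCommGroup M] [Module A M] [Module.Finite A M] :
    UpperSemicontinuous (fun p : PrimeSpectrum A => fibreDimension A M p) :=
  upperSemicontinuous_fibreDimension_general A M
end
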